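/- For the Finsler function F = e^{−2x1}(y2³ + e^{−x1 x3} y3 y1²)^{2/3} on U = {(x,y) ∈ ℝ³×ℝ³ : y1 ≠ 0}, the Barthel connection coefficients are N^1_1 = −½(3 + x3)y1, N^2_1 = −(3/4)y2, N^2_2 = −(3/4)y1, N^3_1 = −(3/4)y2³/(y1² e^{−x1 x3}), N^3_2 = (9/4)y2²/(y1 e^{−x1 x3}), N^3_3 = −y3 x1, and all other coefficients vanish. -/

import Mathlib

/-!
Write `B = e^{-x1 x3}`, `C = e^{-2 x1}` and `A = y2³ + B y3 y1²`, so that `F² = C A^{2/3}`.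
Every derivative of `F²` that enters `G` then comes from the chain rule, with `A^{-1/3}` as a
common factor. Instead of inverting `g`, one checks that the explicit candidate `G` satisfies
`g_{km} G^m = ¼ (y^j ∂_{x^j} ∂̇_k F² - ∂_{x^k} F²)`, a rational identity once that factor
is cleared; as `ginv` is a left inverse of `g`, this forces `G` to be the candidate on `U`, and
since `U` is open in `y`, `N^i_j = ∂̇_j G^i` is the derivative of the candidate.
-/

open scoped BigOperators

/-- Partial derivative of `f` with respect to the `j`-th coordinate at `v`. -/
noncomputable def pd {n : ℕ} (f : (Fin n → ℝ) → ℝ) (j : Fin n) (v : Fin n → ℝ) : ℝ :=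
  deriv (fun t => f (Function.update v j t)) (v j)

/-- The square of the Finsler function: `F² = e^{−2x1}(y2³ + e^{−x1x3} y3 y1²)^{2/3}`. -/
noncomputable def F2 (x y : Fin 3 → ℝ) : ℝ :=
  Real.exp (-2 * x 0) * ((y 1) ^ 3 + Real.exp (-(x 0) * (x 2)) * (y 2) * (y 0) ^ 2) ^ ((2 : ℝ) / 3)

/-- The open set `U`: `y1 ≠ 0` (and the quantity under the cube root positive). -/
def U (x y : Fin 3 → ℝ) : Prop :=
  y 0 ≠ 0 ∧ 0 < (y 1) ^ 3 + Real.exp (-(x 0) * (x 2)) * (y 2) * (y 0) ^ 2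

open Filter Topology

section PartialDerivative

variable {n : ℕ}

/-- `HasFDerivAt f (covec a) v` says that `a` is the gradient of `f` at `v`. -/
noncomputable def covec (a : Fin n → ℝ) : (Fin n → ℝ) →L[ℝ] ℝ :=
  ∑ k, a k • ContinuousLinearMap.proj k

@[simp]
lemma covec_apply (a v : Fin n → ℝ) : covec a v = ∑ k, a k * v k := by
  simp [covec]

lemma hasFDerivAt_coord (j : Fin n) (v : Fin n → ℝ) :
    HasFDerivAt (fun w : Fin n → ℝ => w j)
      (ContinuousLinearMap.proj j : (Fin n → ℝ) →L[ℝ] ℝ) v :=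
  hasFDerivAt_apply j v

lemma HasFDerivAt.pd_eq {f : (Fin n → ℝ) → ℝ} {a v : Fin n → ℝ}
    (h : HasFDerivAt f (covec a) v) (j : Fin n) : pd f j v = a j := by
  have hline :=
    (Function.update_eq_self j v ▸ h).comp_hasDerivAt (v j) (hasDerivAt_update v j (v j))
  exact hline.deriv.trans (by simp [Pi.single_apply])

lemma Filter.EventuallyEq.pd_eq {f g : (Fin n → ℝ) → ℝ} {v : Fin n → ℝ}
    (h : f =ᶠ[𝓝 v] g) (j : Fin n) : pd f j v = pd g j v := by
  have hline : Tendsto (Function.update v j) (𝓝 (v j)) (𝓝 v) := by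
    simpa using (hasDerivAt_update v j (v j)).continuousAt.tendsto
  exact Filter.EventuallyEq.deriv_eq (hline.eventually h)

end PartialDerivative

lemma sum_mul_sum_eq_of_mul_eq_one {ι R : Type*} [Fintype ι] [DecidableEq ι] [Semiring R]
    {M N : ι → ι → R} (h : ∀ i k, ∑ j, N i j * M j k = if i = k then 1 else 0)
    (s : ι → R) (i : ι) : ∑ k, N i k * ∑ m, M k m * s m = s i := by
  have hNM : Matrix.of N * Matrix.of M = 1 := by
    ext a b; simp [Matrix.mul_apply, Matrix.one_apply, h]
  simpa [Matrix.mulVec, dotProduct] using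
    congrFun (show (Matrix.of N).mulVec ((Matrix.of M).mulVec s) = s by
      rw [Matrix.mulVec_mulVec, hNM, Matrix.one_mulVec]) i

namespace CubicFinsler

section Gradients

variable (x y : Fin 3 → ℝ)

noncomputable def B : ℝ := Real.exp (-(x 0) * x 2)

noncomputable def C : ℝ := Real.exp (-2 * x 0)

/-- `F2 x y` is definitionally `C x * A x y ^ (2 / 3)`. -/
noncomputable def A : ℝ := y 1 ^ 3 + B x * y 2 * y 0 ^ 2

noncomputable def R : ℝ := A x y ^ (-(1 / 3) : ℝ)

noncomputable def dxB : Fin 3 → ℝ := ![-(x 2) * B x, 0, -(x 0) * B x]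

noncomputable def dxC : Fin 3 → ℝ := ![-2 * C x, 0, 0]

noncomputable def dyA : Fin 3 → ℝ := ![2 * B x * y 2 * y 0, 3 * y 1 ^ 2, B x * y 0 ^ 2]

noncomputable def dyyA : Matrix (Fin 3) (Fin 3) ℝ :=
  !![2 * B x * y 2, 0, 2 * B x * y 0;
     0, 6 * y 1, 0;
     2 * B x * y 0, 0, 0]

lemma hasFDerivAt_B : HasFDerivAt B (covec (dxB x)) x :=
  (((hasFDerivAt_coord 0 x).neg.mul (hasFDerivAt_coord 2 x)).exp).congr_fderiv <| by
    ext v; simp [B, dxB, Fin.sum_univ_three]; ring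

lemma hasFDerivAt_C : HasFDerivAt C (covec (dxC x)) x :=
  (((hasFDerivAt_coord 0 x).const_mul (-2)).exp).congr_fderiv <| by
    ext v; simp [C, dxC, Fin.sum_univ_three]; ring

lemma hasFDerivAt_A_y : HasFDerivAt (A x) (covec (dyA x y)) y :=
  (((hasFDerivAt_coord 1 y).pow 3).add (((hasFDerivAt_coord 2 y).const_mul (B x)).mul
    ((hasFDerivAt_coord 0 y).pow 2))).congr_fderiv <| by
    ext v; simp [dyA, Fin.sum_univ_three]; ring

lemma hasFDerivAt_A_x : HasFDerivAt (A · y) (covec ((y 2 * y 0 ^ 2) • dxB x)) x :=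
  ((((hasFDerivAt_B x).mul_const (y 2)).mul_const (y 0 ^ 2)).const_add (y 1 ^ 3)).congr_fderiv <| by
    ext v; simp [Fin.sum_univ_three]; ring

lemma hasFDerivAt_dyA_y (k : Fin 3) : HasFDerivAt (dyA x · k) (covec (dyyA x y k)) y := by
  fin_cases k
  · exact (((hasFDerivAt_coord 2 y).const_mul (2 * B x)).mul
      (hasFDerivAt_coord 0 y)).congr_fderiv <| by
      ext v; simp [dyyA, Fin.sum_univ_three]; ring
  · exact (((hasFDerivAt_coord 1 y).pow 2).const_mul 3).congr_fderiv <| by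
      ext v; simp [dyyA, Fin.sum_univ_three]; ring
  · exact (((hasFDerivAt_coord 0 y).pow 2).const_mul (B x)).congr_fderiv <| by
      ext v; simp [dyyA, Fin.sum_univ_three]; ring

lemma hasFDerivAt_dyA_x (k : Fin 3) :
    HasFDerivAt (dyA · y k) (covec (![2 * y 2 * y 0, 0, y 0 ^ 2] k • dxB x)) x := by
  fin_cases k
  · exact ((((hasFDerivAt_B x).const_mul 2).mul_const (y 2)).mul_const (y 0)).congr_fderiv <| by
      ext v; simp [Fin.sum_univ_three]; ring
  · exact (hasFDerivAt_const _ x).congr_fderiv <| by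
      ext v; simp
  · exact ((hasFDerivAt_B x).mul_const (y 0 ^ 2)).congr_fderiv <| by
      ext v; simp [Fin.sum_univ_three]; ring

noncomputable def dyF2 : Fin 3 → ℝ := (2 / 3 * C x * R x y) • dyA x y

noncomputable def dxF2 : Fin 3 → ℝ :=
  (A x y * R x y) • dxC x + (2 / 3 * C x * R x y * (y 2 * y 0 ^ 2)) • dxB x

noncomputable def dyyF2 (k : Fin 3) : Fin 3 → ℝ :=
  (2 / 3 * C x) • (R x y • dyyA x y k + (dyA x y k * (-(1 / 3) * R x y / A x y)) • dyA x y)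

noncomputable def dxdyF2 (k : Fin 3) : Fin 3 → ℝ :=
  (2 / 3 : ℝ) • ((R x y * dyA x y k) • dxC x +
    (C x * (dyA x y k * (-(1 / 3) * R x y / A x y * (y 2 * y 0 ^ 2)) +
      R x y * ![2 * y 2 * y 0, 0, y 0 ^ 2] k)) • dxB x)

end Gradients

variable {x y : Fin 3 → ℝ}

lemma rpow_two_thirds_A (hA : 0 < A x y) : A x y ^ ((2 : ℝ) / 3) = A x y * R x y := by
  rw [R, ← Real.rpow_one_add' hA.le (by norm_num)]; norm_num

lemma hasFDerivAt_R_y (hA : 0 < A x y) :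
    HasFDerivAt (R x) (covec ((-(1 / 3) * R x y / A x y) • dyA x y)) y :=
  ((hasFDerivAt_A_y x y).rpow_const (p := -(1 / 3)) (Or.inl hA.ne')).congr_fderiv <| by
    ext v; simp [R, Real.rpow_sub_one hA.ne', Fin.sum_univ_three]; ring

lemma hasFDerivAt_R_x (hA : 0 < A x y) :
    HasFDerivAt (R · y) (covec ((-(1 / 3) * R x y / A x y * (y 2 * y 0 ^ 2)) • dxB x)) x :=
  ((hasFDerivAt_A_x x y).rpow_const (p := -(1 / 3)) (Or.inl hA.ne')).congr_fderiv <| by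
    ext v; simp [R, Real.rpow_sub_one hA.ne', Fin.sum_univ_three]; ring

lemma hasFDerivAt_F2_y (hA : 0 < A x y) : HasFDerivAt (F2 x) (covec (dyF2 x y)) y :=
  (((hasFDerivAt_A_y x y).rpow_const (p := 2 / 3) (Or.inl hA.ne')).const_mul
    (C x)).congr_fderiv <| by
    ext v; simp [dyF2, R, Fin.sum_univ_three]; norm_num; ring

lemma hasFDerivAt_F2_x (hA : 0 < A x y) : HasFDerivAt (F2 · y) (covec (dxF2 x y)) x :=
  ((hasFDerivAt_C x).mul
    ((hasFDerivAt_A_x x y).rpow_const (p := 2 / 3) (Or.inl hA.ne'))).congr_fderiv <| by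
    ext v; simp [dxF2, R, rpow_two_thirds_A hA, Fin.sum_univ_three]; norm_num; ring

lemma hasFDerivAt_dyF2_y (hA : 0 < A x y) (k : Fin 3) :
    HasFDerivAt (dyF2 x · k) (covec (dyyF2 x y k)) y :=
  (((hasFDerivAt_R_y hA).const_mul (2 / 3 * C x)).mul (hasFDerivAt_dyA_y x y k)).congr_fderiv <| by
    ext v; simp [dyyF2, Fin.sum_univ_three]; ring

lemma hasFDerivAt_dyF2_x (hA : 0 < A x y) (k : Fin 3) :
    HasFDerivAt (dyF2 · y k) (covec (dxdyF2 x y k)) x :=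
  ((((hasFDerivAt_C x).const_mul (2 / 3)).mul (hasFDerivAt_R_x hA)).mul
    (hasFDerivAt_dyA_x x y k)).congr_fderiv <| by
    ext v; simp [dxdyF2, Fin.sum_univ_three]; ring

lemma eventually_pos_A_y (hA : 0 < A x y) : ∀ᶠ y' in 𝓝 y, 0 < A x y' :=
  (hasFDerivAt_A_y x y).continuousAt.eventually (lt_mem_nhds hA)

lemma eventually_pos_A_x (hA : 0 < A x y) : ∀ᶠ x' in 𝓝 x, 0 < A x' y :=
  (hasFDerivAt_A_x x y).continuousAt.eventually (lt_mem_nhds hA)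

lemma pd_F2_x (hA : 0 < A x y) (k : Fin 3) : pd (F2 · y) k x = dxF2 x y k :=
  (hasFDerivAt_F2_x hA).pd_eq k

lemma pd_pd_F2_yy (hA : 0 < A x y) (i k : Fin 3) :
    pd (fun y' => pd (F2 x) k y') i y = dyyF2 x y k i := by
  have h : (pd (F2 x) k ·) =ᶠ[𝓝 y] (dyF2 x · k) :=
    (eventually_pos_A_y hA).mono fun y' hA' => (hasFDerivAt_F2_y hA').pd_eq k
  rw [h.pd_eq i]
  exact (hasFDerivAt_dyF2_y hA k).pd_eq i

lemma pd_pd_F2_xy (hA : 0 < A x y) (j k : Fin 3) :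
    pd (fun x' => pd (F2 x') k y) j x = dxdyF2 x y k j := by
  have h : (fun x' => pd (F2 x') k y) =ᶠ[𝓝 x] (dyF2 · y k) :=
    (eventually_pos_A_x hA).mono fun x' hA' => (hasFDerivAt_F2_y hA').pd_eq k
  rw [h.pd_eq j]
  exact (hasFDerivAt_dyF2_x hA k).pd_eq j

variable (x y) in
/-- Read off the claimed `N` through Euler's relation `G^i = ½ N^i_j y^j` for the
2-homogeneous spray. -/
noncomputable def spray : Fin 3 → ℝ :=
  ![-(1 / 4) * (3 + x 2) * y 0 ^ 2, -(3 / 4) * (y 0 * y 1),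
    3 / 4 * y 1 ^ 3 / (y 0 * B x) - 1 / 2 * (x 0 * y 2 ^ 2)]

lemma spray_spec (hy0 : y 0 ≠ 0) (hA : 0 < A x y) (k : Fin 3) :
    ∑ j, y j * dxdyF2 x y k j - dxF2 x y k = 4 * ∑ m, 1 / 2 * dyyF2 x y m k * spray x y m := by
  have hB : B x ≠ 0 := (Real.exp_pos _).ne'
  fin_cases k <;>
  · simp [dxdyF2, dxF2, dyyF2, spray, dyA, dyyA, dxB, dxC, Fin.sum_univ_three,
      Matrix.vecHead, Matrix.vecTail]
    field_simp [hA.ne']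
    simp only [A]
    ring

lemma eq_spray {g ginv : Fin 3 → Fin 3 → ℝ} {G : Fin 3 → ℝ} (hU : U x y)
    (hg : ∀ i j, g i j = (1 / 2) * pd (fun y' => pd (fun y'' => F2 x y'') j y') i y)
    (hginv : ∀ i k, (∑ j, ginv i j * g j k) = if i = k then (1 : ℝ) else 0)
    (hG : ∀ i, G i = (1 / 4) * ∑ k, ginv i k *
      ((∑ j, y j * pd (fun x' => pd (fun y' => F2 x' y') k y) j x)
        - pd (fun x' => F2 x' y) k x)) :
    G = spray x y := by
  have hb : ∀ k, (∑ j, y j * pd (fun x' => pd (fun y' => F2 x' y') k y) j x)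
      - pd (fun x' => F2 x' y) k x = 4 * ∑ m, g k m * spray x y m := by
    intro k
    simp only [pd_pd_F2_xy hU.2, pd_F2_x hU.2, hg, pd_pd_F2_yy hU.2]
    exact spray_spec hU.1 hU.2 k
  funext i
  simp only [hG, hb, mul_left_comm _ (4 : ℝ), ← Finset.mul_sum,
    sum_mul_sum_eq_of_mul_eq_one hginv]
  ring

variable (x y) in
noncomputable def barthel : Matrix (Fin 3) (Fin 3) ℝ :=
  !![-(1 / 2) * (3 + x 2) * y 0, 0, 0;
     -(3 / 4) * y 1, -(3 / 4) * y 0, 0;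
     -(3 / 4) * y 1 ^ 3 / (y 0 ^ 2 * B x), 9 / 4 * y 1 ^ 2 / (y 0 * B x), -y 2 * x 0]

lemma hasFDerivAt_spray (hy0 : y 0 ≠ 0) (i : Fin 3) :
    HasFDerivAt (spray x · i) (covec (barthel x y i)) y := by
  have hB : B x ≠ 0 := (Real.exp_pos _).ne'
  fin_cases i
  · exact (((hasFDerivAt_coord 0 y).pow 2).const_mul (-(1 / 4) * (3 + x 2))).congr_fderiv <| by
      ext v; simp [barthel, Fin.sum_univ_three]; ring
  · exact (((hasFDerivAt_coord 0 y).mul (hasFDerivAt_coord 1 y)).const_mul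
      (-(3 / 4))).congr_fderiv <| by
      ext v; simp [barthel, Fin.sum_univ_three]; ring
  · have hinv := (hasDerivAt_inv (mul_ne_zero hy0 hB)).comp_hasFDerivAt y
      ((hasFDerivAt_coord 0 y).mul_const (B x))
    exact ((((hasFDerivAt_coord 1 y).pow 3).const_mul (3 / 4)).mul hinv |>.sub
      (((hasFDerivAt_coord 2 y).pow 2).const_mul (x 0) |>.const_mul (1 / 2))).congr_fderiv <| by
      ext v; simp [barthel, Fin.sum_univ_three]; field_simp; ring

lemma eventually_U (hU : U x y) : ∀ᶠ y' in 𝓝 y, U x y' :=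
  ((continuous_apply 0).continuousAt.eventually_ne hU.1).and (eventually_pos_A_y hU.2)

end CubicFinsler

/-- the Barthel connection coefficients of
`F = e^{−x1}(y2³ + e^{−x1x3} y3 y1²)^{1/3}` are
`N^1_1 = −½(3+x3)y1`, `N^2_1 = −(3/4)y2`, `N^2_2 = −(3/4)y1`,
`N^3_1 = −(3/4)y2³/(y1² e^{−x1x3})`, `N^3_2 = (9/4)y2²/(y1 e^{−x1x3})`, `N^3_3 = −y3 x1`,
and all other coefficients vanish. -/
theorem statement4
    (g ginv : (Fin 3 → ℝ) → (Fin 3 → ℝ) → Fin 3 → Fin 3 → ℝ)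
    (G : (Fin 3 → ℝ) → (Fin 3 → ℝ) → Fin 3 → ℝ)
    (N : (Fin 3 → ℝ) → (Fin 3 → ℝ) → Fin 3 → Fin 3 → ℝ)
    (hg : ∀ x y, U x y → ∀ i j,
      g x y i j = (1 / 2) * pd (fun y' => pd (fun y'' => F2 x y'') j y') i y)
    (hginv : ∀ x y, U x y → ∀ i k,
      (∑ j, ginv x y i j * g x y j k) = if i = k then (1 : ℝ) else 0)
    (hG : ∀ x y, U x y → ∀ i,
      G x y i = (1 / 4) * ∑ k, ginv x y i k *
        ((∑ j, y j * pd (fun x' => pd (fun y' => F2 x' y') k y) j x)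
          - pd (fun x' => F2 x' y) k x))
    (hN : ∀ x y, U x y → ∀ i j, N x y i j = pd (fun y' => G x y' i) j y) :
    ∀ x y, U x y → ∀ i j,
      N x y i j =
        (!![-(1 / 2) * (3 + x 2) * y 0, 0, 0;
            -(3 / 4) * y 1, -(3 / 4) * y 0, 0;
            -(3 / 4) * (y 1) ^ 3 / ((y 0) ^ 2 * Real.exp (-(x 0) * (x 2))),
              (9 / 4) * (y 1) ^ 2 / ((y 0) * Real.exp (-(x 0) * (x 2))),
              -(y 2) * (x 0)] : Matrix (Fin 3) (Fin 3) ℝ) i j := by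
  intro x y hU i j
  have hG_spray : (G x · i) =ᶠ[𝓝 y] (CubicFinsler.spray x · i) :=
    (CubicFinsler.eventually_U hU).mono fun y' hU' =>
      congrFun (CubicFinsler.eq_spray hU' (hg x y' hU') (hginv x y' hU') (hG x y' hU')) i
  rw [hN x y hU i j, hG_spray.pd_eq j]
  exact (CubicFinsler.hasFDerivAt_spray hU.1 i).pd_eq j
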